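/- Let E be a complex vector space with endomorphism d satisfying d^N = 0 (N ≥ 2), and let ℓ, m be positive integers with ℓ + m ≤ N. Then the sequence H^{(ℓ+m)} → H^{(ℓ)} → H^{(N-m)} is exact at H^{(ℓ)}, where the first map is induced by d^m and the second by the inclusion ker(d^ℓ) ⊆ ker(d^{N-m}). -/
import Mathlib


/-- exactness of `H^(ℓ+m) →[d^m] H^(ℓ) →[i^(N-(ℓ+m))] H^(N-m)` at
`H^(ℓ)`, stated at the level of representatives: for `y ∈ ker(d^ℓ)`, the class
of `y` vanishes in `H^(N-m) = ker(d^(N-m))/im(d^m)` iff the class of `y` in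
`H^(ℓ)` is in the image of the map induced by `d^m`. -/
theorem hexagon_exact_at_Hl
    (E : Type*) [AddCommGroup E] [Module ℂ E]
    (d : E →ₗ[ℂ] E) (N : ℕ) (hN : 2 ≤ N) (hd : d ^ N = 0)
    (ℓ m : ℕ) (hℓ : 1 ≤ ℓ) (hm : 1 ≤ m) (hlm : ℓ + m ≤ N) :
    ∀ y ∈ LinearMap.ker (d ^ ℓ),
      (y ∈ LinearMap.range (d ^ m) ↔
        ∃ x ∈ LinearMap.ker (d ^ (ℓ + m)),
          y - (d ^ m) x ∈ LinearMap.range (d ^ (N - ℓ))) := by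
  intro y hy
  simp only [LinearMap.mem_ker] at hy
  constructor
  · rintro ⟨x, rfl⟩
    refine ⟨x, ?_, 0, by simp⟩
    simp only [LinearMap.mem_ker, pow_add, Module.End.mul_apply] at hy ⊢
    exact hy
  · rintro ⟨x, hx, z, hz⟩
    refine ⟨x + (d ^ (N - ℓ - m)) z, ?_⟩
    have hpow : d ^ (N - ℓ) = d ^ m * d ^ (N - ℓ - m) := by
      rw [← pow_add]; congr 1; omega
    rw [map_add, ← Module.End.mul_apply, ← hpow, hz]
    abel
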